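/- If π: F₂^m → F₂^m is an affine bijection (each coordinate function πᵢ is affine), then AI(⟨π(X),Y⟩ ⊕ h(X)) ≥ AI(h) for any m-variable Boolean function h. -/
import Mathlib


abbrev BF (n : ℕ) := (Fin n → ZMod 2) → ZMod 2

/-- Hamming weight of a vector in `F₂ⁿ`. -/
def wtv {n : ℕ} (x : Fin n → ZMod 2) : ℕ :=
  (Finset.univ.filter fun i => x i = 1).card

/-- ANF coefficient `a_α = ⊕_{z ≤ α} f(z)`. -/
def anf {n : ℕ} (f : BF n) (α : Fin n → ZMod 2) : ZMod 2 :=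
  ∑ z ∈ Finset.univ.filter (fun z : Fin n → ZMod 2 => ∀ i, z i = 1 → α i = 1), f z

/-- Algebraic degree: the maximum weight of `α` with nonzero ANF coefficient
(0 for the zero function). -/
def degBF {n : ℕ} (f : BF n) : ℕ :=
  (Finset.univ.filter fun α => anf f α ≠ 0).sup wtv

/-- Algebraic immunity: minimum degree of a nonzero annihilator of `f` or of `1 ⊕ f`. -/
noncomputable def AI {n : ℕ} (f : BF n) : ℕ :=
  sInf {d : ℕ | ∃ g : BF n, g ≠ 0 ∧ degBF g = d ∧
    ((∀ x, g x * f x = 0) ∨ (∀ x, g x * (1 + f x) = 0))}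

/-- Inner product over F₂. -/
def ip {m : ℕ} (x y : Fin m → ZMod 2) : ZMod 2 := ∑ i, x i * y i

/-- The Maiorana-McFarland function MM_{2m}(X,Y) = ⟨π(X),Y⟩ ⊕ h(X), viewed as a
Boolean function of the 2m variables (X,Y). -/
def MM (m : ℕ) (π : (Fin m → ZMod 2) → (Fin m → ZMod 2)) (h : BF m) : BF (m + m) :=
  fun u => ip (π fun i => u (Fin.castAdd m i)) (fun i => u (Fin.natAdd m i))
    + h (fun i => u (Fin.castAdd m i))

-- zmod2 facts
lemma z2_not_one {a : ZMod 2} (h : ¬ a = 1) : a = 0 := by revert h; revert a; decide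

-- flip helper
lemma sum_flip_zero {n : ℕ} (p : (Fin n → ZMod 2) → Prop) [DecidablePred p] (i₀ : Fin n)
    (f : (Fin n → ZMod 2) → ZMod 2)
    (hp : ∀ z, p z → p (Function.update z i₀ (z i₀ + 1)))
    (hf : ∀ z, p z → f (Function.update z i₀ (z i₀ + 1)) = f z) :
    ∑ z ∈ Finset.univ.filter p, f z = 0 := by
  have hmem : ∀ z (hz : z ∈ Finset.univ.filter p),
      Function.update z i₀ (z i₀ + 1) ∈ Finset.univ.filter p := by
    intro z hz
    simp only [Finset.mem_filter, Finset.mem_univ, true_and] at hz ⊢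
    exact hp z hz
  refine Finset.sum_involution (fun z _ => Function.update z i₀ (z i₀ + 1)) ?_ ?_ hmem ?_
  · intro z hz
    simp only [Finset.mem_filter, Finset.mem_univ, true_and] at hz
    rw [hf z hz]
    exact CharTwo.add_self_eq_zero _
  · intro z hz _
    intro hcon
    have := congrFun hcon i₀
    simp only [Function.update_self] at this
    revert this; generalize z i₀ = a; revert a; decide
  · intro z hz
    simp only [Function.update_self, Function.update_idem]
    have : z i₀ + 1 + 1 = z i₀ := by generalize z i₀ = a; revert a; decide
    rw [this, Function.update_eq_self]

-- Möbius inversion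
lemma eval_eq_sum_anf {n : ℕ} (f : BF n) (x : Fin n → ZMod 2) :
    f x = ∑ α ∈ Finset.univ.filter (fun α : Fin n → ZMod 2 => ∀ i, α i = 1 → x i = 1),
      anf f α := by
  simp only [anf, Finset.sum_filter]
  have : ∀ α : Fin n → ZMod 2,
      (if (∀ i, α i = 1 → x i = 1) then
        ∑ z : Fin n → ZMod 2, (if (∀ i, z i = 1 → α i = 1) then f z else 0) else 0)
      = ∑ z : Fin n → ZMod 2,
          (if ((∀ i, z i = 1 → α i = 1) ∧ (∀ i, α i = 1 → x i = 1)) then f z else 0) := by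
    intro α
    split_ifs with hα
    · refine Finset.sum_congr rfl fun z _ => ?_
      split_ifs with h1 h2 h3 <;> tauto
    · symm; refine Finset.sum_eq_zero fun z _ => ?_
      split_ifs with h1 <;> tauto
  rw [Finset.sum_congr rfl (fun α _ => this α), Finset.sum_comm]
  have key : ∀ z : Fin n → ZMod 2,
      (∑ α : Fin n → ZMod 2,
        if ((∀ i, z i = 1 → α i = 1) ∧ (∀ i, α i = 1 → x i = 1)) then f z else 0)
      = if z = x then f x else 0 := by
    intro z
    rw [← Finset.sum_filter]
    split_ifs with hzx
    · subst hzx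
      have : Finset.univ.filter (fun α : Fin n → ZMod 2 =>
          (∀ i, z i = 1 → α i = 1) ∧ (∀ i, α i = 1 → z i = 1)) = {z} := by
        ext α
        simp only [Finset.mem_filter, Finset.mem_univ, true_and, Finset.mem_singleton]
        constructor
        · rintro ⟨h1, h2⟩
          funext i
          rcases em (α i = 1) with h | h
          · rw [h]; exact (h2 i h).symm
          · have hα0 := z2_not_one h
            have : ¬ z i = 1 := fun hz => h (h1 i hz)
            rw [hα0, z2_not_one this]
        · rintro rfl; exact ⟨fun _ h => h, fun _ h => h⟩
      rw [this, Finset.sum_singleton]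
    · by_cases hle : ∀ i, z i = 1 → x i = 1
      · -- z ≤ x, z ≠ x : get i₀ with z i₀ = 0, x i₀ = 1
        have : ∃ i₀, z i₀ = 0 ∧ x i₀ = 1 := by
          by_contra hcon
          push_neg at hcon
          apply hzx
          funext i
          rcases em (z i = 1) with h | h
          · rw [h, hle i h]
          · have h0 := z2_not_one h
            rw [h0, z2_not_one (hcon i h0)]
        obtain ⟨i₀, hz0, hx1⟩ := this
        apply sum_flip_zero _ i₀
        · rintro α ⟨h1, h2⟩
          constructor
          · intro i hi
            rcases em (i = i₀) with rfl | hne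
            · exact absurd hi (by rw [hz0]; decide)
            · rw [Function.update_of_ne hne]; exact h1 i hi
          · intro i hi
            rcases em (i = i₀) with rfl | hne
            · exact hx1
            · rw [Function.update_of_ne hne] at hi; exact h2 i hi
        · intro _ _; rfl
      · -- filter is empty
        refine Finset.sum_eq_zero fun α hα => ?_
        simp only [Finset.mem_filter, Finset.mem_univ, true_and] at hα
        exact absurd (fun i hi => hα.2 i (hα.1 i hi)) hle
  rw [Finset.sum_congr rfl (fun z _ => key z)]
  have : ∀ z : Fin n → ZMod 2, (if z = x then f x else 0) = if z = x then f z else 0 := by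
    intro z; split_ifs with hh
    · rw [hh]
    · rfl
  rw [Finset.sum_congr rfl (fun z _ => this z), Finset.sum_ite_eq' Finset.univ x f]
  simp

lemma anf_of_zero {n : ℕ} (f : BF n) (hf : f = 0) (α : Fin n → ZMod 2) : anf f α = 0 := by
  subst hf
  exact Finset.sum_eq_zero fun z _ => rfl

lemma eq_zero_of_anf {n : ℕ} (f : BF n) (h : ∀ α, anf f α = 0) : f = 0 := by
  funext x
  rw [show f x = _ from eval_eq_sum_anf f x]
  exact Finset.sum_eq_zero fun α _ => h α

lemma wtv_le_degBF {n : ℕ} {f : BF n} {α : Fin n → ZMod 2} (h : anf f α ≠ 0) :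
    wtv α ≤ degBF f :=
  Finset.le_sup (by simpa using h)

lemma degBF_le {n : ℕ} {f : BF n} {D : ℕ} (h : ∀ α, anf f α ≠ 0 → wtv α ≤ D) :
    degBF f ≤ D := by
  apply Finset.sup_le
  intro α hα
  simp only [Finset.mem_filter, Finset.mem_univ, true_and] at hα
  exact h α hα

lemma anf_add {n : ℕ} (f g : BF n) (α : Fin n → ZMod 2) :
    anf (fun x => f x + g x) α = anf f α + anf g α := by
  unfold anf
  rw [← Finset.sum_add_distrib]

lemma anf_finsum {n : ℕ} {ι : Type*} (s : Finset ι) (F : ι → BF n) (α : Fin n → ZMod 2) :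
    anf (fun x => ∑ i ∈ s, F i x) α = ∑ i ∈ s, anf (F i) α := by
  unfold anf
  rw [Finset.sum_comm]

lemma degBF_finsum {n : ℕ} {ι : Type*} (s : Finset ι) (F : ι → BF n) (D : ℕ)
    (h : ∀ i ∈ s, degBF (F i) ≤ D) :
    degBF (fun x => ∑ i ∈ s, F i x) ≤ D := by
  apply degBF_le
  intro α hα
  rw [anf_finsum] at hα
  obtain ⟨i, hi, hne⟩ := Finset.exists_ne_zero_of_sum_ne_zero hα
  exact le_trans (wtv_le_degBF hne) (h i hi)

lemma anf_one_of_ne {n : ℕ} (α : Fin n → ZMod 2) (i₀ : Fin n) (hα : α i₀ = 1) :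
    anf (fun _ => (1 : ZMod 2)) α = 0 := by
  unfold anf
  apply sum_flip_zero _ i₀
  · intro z hz i hi
    rcases em (i = i₀) with rfl | hne
    · exact hα
    · rw [Function.update_of_ne hne] at hi; exact hz i hi
  · intro _ _; rfl

lemma wtv_pos_exists {n : ℕ} {α : Fin n → ZMod 2} (h : 1 ≤ wtv α) : ∃ i, α i = 1 := by
  unfold wtv at h
  obtain ⟨i, hi⟩ := Finset.card_pos.mp h
  simp only [Finset.mem_filter, Finset.mem_univ, true_and] at hi
  exact ⟨i, hi⟩

lemma degBF_one_add {n : ℕ} (ℓ : BF n) (hℓ : degBF ℓ ≤ 1) :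
    degBF (fun x => 1 + ℓ x) ≤ 1 := by
  apply degBF_le
  intro α hα
  rw [anf_add (fun _ => 1) ℓ] at hα
  by_contra hw
  push_neg at hw
  obtain ⟨i₀, hi₀⟩ := wtv_pos_exists (α := α) (by omega)
  rw [anf_one_of_ne α i₀ hi₀, zero_add] at hα
  exact hw.not_ge (le_trans (wtv_le_degBF hα) hℓ)

lemma wtv_eq_zero {n : ℕ} {α : Fin n → ZMod 2} (h : wtv α = 0) (i : Fin n) : α i = 0 := by
  unfold wtv at h
  rw [Finset.card_eq_zero] at h
  apply z2_not_one
  intro h1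
  have : i ∈ Finset.univ.filter (fun i => α i = 1) := by simpa using h1
  rw [h] at this
  simp at this

lemma wtv_update_zero {n : ℕ} (α : Fin n → ZMod 2) (i₀ : Fin n) :
    wtv α ≤ wtv (Function.update α i₀ 0) + 1 := by
  unfold wtv
  have hsub : Finset.univ.filter (fun i => α i = 1) ⊆
      insert i₀ (Finset.univ.filter (fun i => Function.update α i₀ 0 i = 1)) := by
    intro j hj
    simp only [Finset.mem_filter, Finset.mem_univ, true_and] at hj
    rcases em (j = i₀) with rfl | hne
    · exact Finset.mem_insert_self _ _
    · apply Finset.mem_insert_of_mem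
      simp only [Finset.mem_filter, Finset.mem_univ, true_and]
      rw [Function.update_of_ne hne]; exact hj
  calc (Finset.univ.filter (fun i => α i = 1)).card
      ≤ (insert i₀ (Finset.univ.filter (fun i => Function.update α i₀ 0 i = 1))).card :=
        Finset.card_le_card hsub
    _ ≤ _ + 1 := Finset.card_insert_le _ _

lemma degBF_mul_affine {n : ℕ} (f p : BF n) (hp : degBF p ≤ 1) :
    degBF (fun x => f x * p x) ≤ degBF f + 1 := by
  apply degBF_le
  intro α hα
  have h1 : anf (fun x => f x * p x) α
      = ∑ β : Fin n → ZMod 2,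
          (∑ z ∈ Finset.univ.filter (fun z : Fin n → ZMod 2 =>
              (∀ i, β i = 1 → z i = 1) ∧ (∀ i, z i = 1 → α i = 1)), f z) * anf p β := by
    calc anf (fun x => f x * p x) α
        = ∑ z ∈ Finset.univ.filter (fun z : Fin n → ZMod 2 => ∀ i, z i = 1 → α i = 1),
            ∑ β ∈ Finset.univ.filter
              (fun β : Fin n → ZMod 2 => ∀ i, β i = 1 → z i = 1), f z * anf p β := by
          show (∑ z ∈ Finset.univ.filter
              (fun z : Fin n → ZMod 2 => ∀ i, z i = 1 → α i = 1), f z * p z) = _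
          refine Finset.sum_congr rfl fun z _ => ?_
          rw [show p z = _ from eval_eq_sum_anf p z, Finset.mul_sum]
      _ = ∑ z : Fin n → ZMod 2, ∑ β : Fin n → ZMod 2,
            (if ((∀ i, β i = 1 → z i = 1) ∧ (∀ i, z i = 1 → α i = 1))
              then f z * anf p β else 0) := by
          rw [Finset.sum_filter]
          refine Finset.sum_congr rfl fun z _ => ?_
          split_ifs with hz
          · rw [Finset.sum_filter]
            refine Finset.sum_congr rfl fun β _ => ?_
            split_ifs <;> tauto
          · symm; refine Finset.sum_eq_zero fun β _ => ?_
            split_ifs <;> tauto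
      _ = ∑ β : Fin n → ZMod 2, ∑ z : Fin n → ZMod 2,
            (if ((∀ i, β i = 1 → z i = 1) ∧ (∀ i, z i = 1 → α i = 1))
              then f z * anf p β else 0) := Finset.sum_comm
      _ = _ := by
          refine Finset.sum_congr rfl fun β _ => ?_
          rw [Finset.sum_mul, Finset.sum_filter]
  rw [h1] at hα
  obtain ⟨β, _, hβ⟩ := Finset.exists_ne_zero_of_sum_ne_zero hα
  have hpβ : anf p β ≠ 0 := fun h => hβ (by rw [h, mul_zero])
  have hS : (∑ z ∈ Finset.univ.filter (fun z : Fin n → ZMod 2 =>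
      (∀ i, β i = 1 → z i = 1) ∧ (∀ i, z i = 1 → α i = 1)), f z) ≠ 0 :=
    fun h => hβ (by rw [h, zero_mul])
  have hwβ : wtv β ≤ 1 := le_trans (wtv_le_degBF hpβ) hp
  rcases Nat.le_one_iff_eq_zero_or_eq_one.mp hwβ with h0 | h1'
  · -- β = 0 : S = anf f α
    have hfilt : Finset.univ.filter (fun z : Fin n → ZMod 2 =>
        (∀ i, β i = 1 → z i = 1) ∧ (∀ i, z i = 1 → α i = 1))
        = Finset.univ.filter (fun z : Fin n → ZMod 2 => ∀ i, z i = 1 → α i = 1) := by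
      apply Finset.filter_congr
      intro z _
      constructor
      · exact fun hz => hz.2
      · intro hz
        refine ⟨fun i hi => ?_, hz⟩
        exact absurd hi (by rw [wtv_eq_zero h0 i]; decide)
    rw [hfilt] at hS
    exact le_trans (wtv_le_degBF (f := f) hS) (Nat.le_succ_of_le le_rfl)
  · -- wtv β = 1
    obtain ⟨i₀, hi₀⟩ := Finset.card_eq_one.mp h1'
    have hβi₀ : ∀ j, β j = 1 ↔ j = i₀ := by
      intro j
      constructor
      · intro hj
        have hmem : j ∈ Finset.univ.filter (fun i => β i = 1) := by simpa using hj
        rw [hi₀] at hmem; simpa using hmem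
      · intro hj
        rw [hj]
        have hmem : i₀ ∈ Finset.univ.filter (fun i => β i = 1) := by
          rw [hi₀]; exact Finset.mem_singleton_self _
        simpa using hmem
    set α' := Function.update α i₀ 0 with hα'
    have e1 : Finset.univ.filter (fun z : Fin n → ZMod 2 =>
          (∀ i, z i = 1 → α i = 1) ∧ z i₀ = 1)
        = Finset.univ.filter (fun z : Fin n → ZMod 2 =>
          (∀ i, β i = 1 → z i = 1) ∧ (∀ i, z i = 1 → α i = 1)) := by
      apply Finset.filter_congr
      intro z _
      constructor
      · rintro ⟨hz, hz0⟩
        exact ⟨fun i hi => by rw [(hβi₀ i).mp hi]; exact hz0, hz⟩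
      · rintro ⟨ha, hb⟩
        exact ⟨hb, ha i₀ ((hβi₀ i₀).mpr rfl)⟩
    have e2 : Finset.univ.filter (fun z : Fin n → ZMod 2 =>
          (∀ i, z i = 1 → α i = 1) ∧ ¬ z i₀ = 1)
        = Finset.univ.filter (fun z : Fin n → ZMod 2 => ∀ i, z i = 1 → α' i = 1) := by
      apply Finset.filter_congr
      intro z _
      constructor
      · rintro ⟨hz, hz0⟩ i hi
        rcases em (i = i₀) with rfl | hne
        · exact absurd hi hz0
        · rw [hα', Function.update_of_ne hne]; exact hz i hi
      · intro hz
        have hz0 : ¬ z i₀ = 1 := by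
          intro hcon
          have hx := hz i₀ hcon
          rw [hα', Function.update_self] at hx
          exact absurd hx (by decide)
        refine ⟨fun i hi => ?_, hz0⟩
        rcases em (i = i₀) with rfl | hne
        · exact absurd hi hz0
        · have hx := hz i hi
          rwa [hα', Function.update_of_ne hne] at hx
    have hsplit : anf f α
        = (∑ z ∈ Finset.univ.filter (fun z : Fin n → ZMod 2 =>
            (∀ i, β i = 1 → z i = 1) ∧ (∀ i, z i = 1 → α i = 1)), f z) + anf f α' := by
      unfold anf
      rw [← Finset.sum_filter_add_sum_filter_not
        (Finset.univ.filter (fun z : Fin n → ZMod 2 => ∀ i, z i = 1 → α i = 1))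
        (fun z => z i₀ = 1), Finset.filter_filter, Finset.filter_filter, e1, e2]
    have hor : anf f α ≠ 0 ∨ anf f α' ≠ 0 := by
      by_contra hcon
      push_neg at hcon
      rw [hcon.1, hcon.2, add_zero] at hsplit
      exact hS hsplit.symm
    rcases hor with h | h
    · exact le_trans (wtv_le_degBF h) (Nat.le_succ_of_le le_rfl)
    · calc wtv α ≤ wtv α' + 1 := wtv_update_zero α i₀
        _ ≤ degBF f + 1 := by
            have := wtv_le_degBF h
            omega

lemma sum_le2_append {M : Type*} [AddCommMonoid M] (m : ℕ) (a b : Fin m → ZMod 2)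
    (F : (Fin (m + m) → ZMod 2) → M) :
    ∑ u ∈ Finset.univ.filter
        (fun u : Fin (m + m) → ZMod 2 => ∀ j, u j = 1 → Fin.append a b j = 1), F u
    = ∑ x ∈ Finset.univ.filter (fun x : Fin m → ZMod 2 => ∀ i, x i = 1 → a i = 1),
        ∑ y ∈ Finset.univ.filter (fun y : Fin m → ZMod 2 => ∀ i, y i = 1 → b i = 1),
          F (Fin.append x y) := by
  rw [← Finset.sum_product']
  refine Finset.sum_nbij' (fun u => ((fun i => u (Fin.castAdd m i)), (fun i => u (Fin.natAdd m i))))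
    (fun p => Fin.append p.1 p.2) ?_ ?_ ?_ ?_ ?_
  · intro u hu
    simp only [Finset.mem_filter, Finset.mem_univ, true_and] at hu
    simp only [Finset.mem_product, Finset.mem_filter, Finset.mem_univ, true_and]
    constructor
    · intro i hi
      have := hu (Fin.castAdd m i) hi
      rwa [Fin.append_left] at this
    · intro i hi
      have := hu (Fin.natAdd m i) hi
      rwa [Fin.append_right] at this
  · intro p hp
    simp only [Finset.mem_product, Finset.mem_filter, Finset.mem_univ, true_and] at hp
    simp only [Finset.mem_filter, Finset.mem_univ, true_and]
    intro j
    refine Fin.addCases (fun i => ?_) (fun i => ?_) j <;> intro hj'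
    · rw [Fin.append_left]
      rw [Fin.append_left] at hj'
      exact hp.1 i hj'
    · rw [Fin.append_right]
      rw [Fin.append_right] at hj'
      exact hp.2 i hj'
  · intro u _
    exact Fin.append_castAdd_natAdd (f := u)
  · intro p _
    refine Prod.ext ?_ ?_ <;> funext i
    · exact Fin.append_left _ _ i
    · exact Fin.append_right _ _ i
  · intro u _
    rw [Fin.append_castAdd_natAdd (f := u)]

lemma anf_Gb (m : ℕ) (g : BF (m + m)) (c α : Fin m → ZMod 2) :
    anf (fun x => g (Fin.append x c)) α
    = ∑ β ∈ Finset.univ.filter (fun β : Fin m → ZMod 2 => ∀ i, β i = 1 → c i = 1),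
        anf g (Fin.append α β) := by
  have step : ∀ x : Fin m → ZMod 2, g (Fin.append x c)
      = ∑ β ∈ Finset.univ.filter (fun β : Fin m → ZMod 2 => ∀ i, β i = 1 → c i = 1),
          ∑ y ∈ Finset.univ.filter (fun y : Fin m → ZMod 2 => ∀ i, y i = 1 → β i = 1),
            g (Fin.append x y) := by
    intro x
    have h := eval_eq_sum_anf (fun y => g (Fin.append x y)) c
    simpa [anf] using h
  show (∑ x ∈ Finset.univ.filter
      (fun x : Fin m → ZMod 2 => ∀ i, x i = 1 → α i = 1), g (Fin.append x c)) = _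
  rw [Finset.sum_congr rfl (fun x _ => step x), Finset.sum_comm]
  refine Finset.sum_congr rfl fun β _ => ?_
  show _ = anf g (Fin.append α β)
  rw [show anf g (Fin.append α β) = _ from rfl]
  exact (sum_le2_append m α β g).symm

lemma wtv_append {m : ℕ} (a b : Fin m → ZMod 2) :
    wtv (Fin.append a b) = wtv a + wtv b := by
  unfold wtv
  rw [Finset.card_filter, Finset.card_filter, Finset.card_filter, Fin.sum_univ_add]
  congr 1
  · refine Finset.sum_congr rfl fun i _ => ?_
    rw [Fin.append_left]
  · refine Finset.sum_congr rfl fun i _ => ?_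
    rw [Fin.append_right]

lemma z2_cases (a : ZMod 2) : a = 0 ∨ a = 1 := by revert a; decide

lemma degBF_zero_le {n : ℕ} {D : ℕ} : degBF (0 : BF n) ≤ D :=
  degBF_le fun α hα => absurd (anf_of_zero _ rfl α) hα

lemma le2_antisymm {m : ℕ} {a b : Fin m → ZMod 2}
    (h1 : ∀ i, a i = 1 → b i = 1) (h2 : ∀ i, b i = 1 → a i = 1) : a = b := by
  funext i
  rcases z2_cases (a i) with ha | ha <;> rcases z2_cases (b i) with hb | hb
  · rw [ha, hb]
  · exact absurd (h2 i hb) (by rw [ha]; decide)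
  · exact absurd (h1 i ha) (by rw [hb]; decide)
  · rw [ha, hb]

lemma wtv_lt {m : ℕ} {a b : Fin m → ZMod 2}
    (hle : ∀ i, a i = 1 → b i = 1) (hne : a ≠ b) : wtv a < wtv b := by
  unfold wtv
  apply Finset.card_lt_card
  rw [Finset.ssubset_iff_subset_ne]
  constructor
  · intro i hi
    simp only [Finset.mem_filter, Finset.mem_univ, true_and] at hi ⊢
    exact hle i hi
  · intro heq
    apply hne
    apply le2_antisymm hle
    intro i hi
    have : i ∈ Finset.univ.filter (fun i => a i = 1) := by
      rw [heq]; simpa using hi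
    simpa using this

lemma z2lem1 : ∀ a l c : ZMod 2, a * (l + c) = 0 → a * (1 + l) * c = 0 := by decide
lemma z2lem2 : ∀ a l c : ZMod 2, a * (l + c) = 0 → a * l * (1 + c) = 0 := by decide
lemma z2lem3 : ∀ a l c : ZMod 2, a * (1 + (l + c)) = 0 → a * (1 + l) * (1 + c) = 0 := by decide
lemma z2lem4 : ∀ a l c : ZMod 2, a * (1 + (l + c)) = 0 → a * l * c = 0 := by decide
lemma z2lem5 : ∀ a l : ZMod 2, a * (1 + l) + a * l = a := by decide

/-- If π is an affine bijection then AI(MM_{2m}) ≥ AI(h). -/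
theorem AI_MM_affine (m : ℕ) (hm : 1 ≤ m)
    (π : (Fin m → ZMod 2) → (Fin m → ZMod 2)) (hπ : Function.Bijective π)
    (haff : ∀ i : Fin m, degBF (fun x => π x i) ≤ 1) (h : BF m) :
    AI h ≤ AI (MM m π h) := by
  classical
  -- the annihilator set is always nonempty
  have hnonempty : ∀ (N : ℕ) (f : BF N), {d : ℕ | ∃ g : BF N, g ≠ 0 ∧ degBF g = d ∧
      ((∀ x, g x * f x = 0) ∨ (∀ x, g x * (1 + f x) = 0))}.Nonempty := by
    intro N f
    by_cases hc : (fun u => 1 + f u) = (0 : BF N)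
    · refine ⟨degBF (fun _ => (1 : ZMod 2)), (fun _ => 1), ?_, rfl, Or.inr ?_⟩
      · intro hcon
        have := congrFun hcon (fun _ => 0)
        simp only [Pi.zero_apply] at this
        exact absurd this (by decide)
      · intro x
        have := congrFun hc x
        simp only [Pi.zero_apply] at this
        rw [this, mul_zero]
    · refine ⟨degBF (fun u => 1 + f u), (fun u => 1 + f u), hc, rfl, Or.inl ?_⟩
      intro x
      show (1 + f x) * f x = 0
      generalize f x = a
      revert a; decide
  obtain ⟨g, hg0, hgdeg, hann⟩ : ∃ g : BF (m + m), g ≠ 0 ∧ degBF g = AI (MM m π h) ∧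
      ((∀ x, g x * MM m π h x = 0) ∨ (∀ x, g x * (1 + MM m π h x) = 0)) :=
    Nat.sInf_mem (hnonempty _ (MM m π h))
  -- choose b of minimal weight with nonzero restriction
  set T : Set ℕ := {w | ∃ b : Fin m → ZMod 2,
      (fun x => g (Fin.append x b)) ≠ (0 : BF m) ∧ wtv b = w} with hT
  have hTne : T.Nonempty := by
    obtain ⟨u, hu⟩ := Function.ne_iff.mp hg0
    refine ⟨wtv (fun i => u (Fin.natAdd m i)), (fun i => u (Fin.natAdd m i)), ?_, rfl⟩
    intro hcon
    have := congrFun hcon (fun i => u (Fin.castAdd m i))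
    rw [Fin.append_castAdd_natAdd (f := u)] at this
    exact hu (by simpa using this)
  obtain ⟨b, hGb0, hwb⟩ := Nat.sInf_mem hTne
  have hmin : ∀ b' : Fin m → ZMod 2,
      (fun x => g (Fin.append x b')) ≠ (0 : BF m) → wtv b ≤ wtv b' := by
    intro b' hb'
    rw [hwb]
    exact Nat.sInf_le ⟨b', hb', rfl⟩
  have hvan : ∀ β : Fin m → ZMod 2, (∀ i, β i = 1 → b i = 1) → β ≠ b →
      (fun x => g (Fin.append x β)) = (0 : BF m) := by
    intro β hle hne'
    by_contra hcon
    exact absurd (hmin β hcon) (by have := wtv_lt hle hne'; omega)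
  have hanfvan : ∀ (k : ℕ) (β : Fin m → ZMod 2), wtv β = k →
      (∀ i, β i = 1 → b i = 1) → β ≠ b →
      ∀ α, anf g (Fin.append α β) = 0 := by
    intro k
    induction k using Nat.strong_induction_on with
    | _ k IH =>
      intro β hwβ hle hneb α
      have h0 : anf (fun x => g (Fin.append x β)) α = 0 :=
        anf_of_zero _ (hvan β hle hneb) α
      rw [anf_Gb] at h0
      rwa [Finset.sum_eq_single_of_mem β
        (by simp only [Finset.mem_filter, Finset.mem_univ, true_and]; exact fun i hi => hi)
        ?_] at h0
      intro β' hβ' hne''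
      simp only [Finset.mem_filter, Finset.mem_univ, true_and] at hβ'
      have hleb : ∀ i, β' i = 1 → b i = 1 := fun i hi => hle i (hβ' i hi)
      have hneb' : β' ≠ b := by
        intro hcon
        subst hcon
        exact hneb (le2_antisymm hle hβ')
      exact IH (wtv β') (by rw [← hwβ]; exact wtv_lt hβ' hne'') β' rfl hleb hneb' α
  have hkey : ∀ α, anf (fun x => g (Fin.append x b)) α = anf g (Fin.append α b) := by
    intro α
    rw [anf_Gb]
    refine Finset.sum_eq_single_of_mem b
      (by simp only [Finset.mem_filter, Finset.mem_univ, true_and]; exact fun i hi => hi) ?_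
    intro β' hβ' hne''
    simp only [Finset.mem_filter, Finset.mem_univ, true_and] at hβ'
    exact hanfvan (wtv β') β' rfl hβ' hne'' α
  set G : BF m := fun x => g (Fin.append x b) with hG
  have hGdeg : ∀ α, anf G α ≠ 0 → wtv α + wtv b ≤ degBF g := by
    intro α hα
    rw [hG, hkey α] at hα
    have := wtv_le_degBF hα
    rwa [wtv_append] at this
  have hwble : wtv b ≤ degBF g := by
    obtain ⟨α, hα⟩ : ∃ α, anf G α ≠ 0 := by
      by_contra hc
      push_neg at hc
      exact hGb0 (eq_zero_of_anf G hc)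
    have := hGdeg α hα
    omega
  have hGdeg' : degBF G ≤ degBF g - wtv b :=
    degBF_le fun α hα => by have := hGdeg α hα; omega
  set L : BF m := fun x => ip (π x) b with hL
  have hMMeval : ∀ x : Fin m → ZMod 2, MM m π h (Fin.append x b) = L x + h x := by
    intro x
    have e1 : (fun i => Fin.append x b (Fin.castAdd m i)) = x :=
      funext fun i => Fin.append_left _ _ i
    have e2 : (fun i => Fin.append x b (Fin.natAdd m i)) = b :=
      funext fun i => Fin.append_right _ _ i
    show ip (π fun i => Fin.append x b (Fin.castAdd m i))
        (fun i => Fin.append x b (Fin.natAdd m i))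
      + h (fun i => Fin.append x b (Fin.castAdd m i)) = L x + h x
    rw [e1, e2]
  have hLdeg : degBF L ≤ 1 := by
    have : degBF (fun x => ∑ i, (fun (i : Fin m) (x : Fin m → ZMod 2) => π x i * b i) i x) ≤ 1 := by
      refine degBF_finsum Finset.univ _ 1 ?_
      intro i _
      rcases z2_cases (b i) with h0 | h1
      · have he : (fun x : Fin m → ZMod 2 => π x i * b i) = (0 : BF m) := by
          funext x
          rw [h0, mul_zero]
          rfl
        rw [he]
        exact degBF_zero_le
      · have he : (fun x : Fin m → ZMod 2 => π x i * b i) = (fun x => π x i) := by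
          funext x
          rw [h1, mul_one]
        rw [he]
        exact haff i
    exact this
  -- the restriction annihilates L + h or 1 + (L + h)
  have hGann : (∀ x, G x * (L x + h x) = 0) ∨ (∀ x, G x * (1 + (L x + h x)) = 0) := by
    rcases hann with hc | hc
    · left; intro x; have := hc (Fin.append x b); rwa [hMMeval x] at this
    · right; intro x; have := hc (Fin.append x b); rwa [hMMeval x] at this
  rcases Nat.eq_zero_or_pos (wtv b) with hb0 | hb1
  · -- b = 0 : L = 0, G annihilates h or 1+h directly
    have hL0 : ∀ x, L x = 0 := by
      intro x
      show ip (π x) b = 0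
      unfold ip
      refine Finset.sum_eq_zero fun i _ => ?_
      rw [wtv_eq_zero hb0 i, mul_zero]
    have hdg : degBF G ≤ degBF g := le_trans hGdeg' (Nat.sub_le _ _)
    rcases hGann with hc | hc
    · have : AI h ≤ degBF G := Nat.sInf_le ⟨G, hGb0, rfl, Or.inl fun x => by
        have := hc x; rwa [hL0 x, zero_add] at this⟩
      omega
    · have : AI h ≤ degBF G := Nat.sInf_le ⟨G, hGb0, rfl, Or.inr fun x => by
        have := hc x; rwa [hL0 x, zero_add] at this⟩
      omega
  · -- wtv b ≥ 1
    set g₀ : BF m := fun x => G x * (1 + L x) with hg₀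
    set g₁ : BF m := fun x => G x * L x with hg₁
    have hdg0 : degBF g₀ ≤ degBF g := by
      have h1 := degBF_mul_affine G (fun x => 1 + L x) (degBF_one_add L hLdeg)
      have : degBF g₀ ≤ degBF G + 1 := h1
      omega
    have hdg1 : degBF g₁ ≤ degBF g := by
      have h1 := degBF_mul_affine G L hLdeg
      have : degBF g₁ ≤ degBF G + 1 := h1
      omega
    have hor : g₀ ≠ (0 : BF m) ∨ g₁ ≠ (0 : BF m) := by
      by_contra hcon
      push_neg at hcon
      apply hGb0
      funext x
      have h0 := congrFun hcon.1 x
      have h1 := congrFun hcon.2 x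
      simp only [Pi.zero_apply] at h0 h1 ⊢
      have := z2lem5 (G x) (L x)
      show G x = 0
      rw [← this, show G x * (1 + L x) = 0 from h0, show G x * L x = 0 from h1, add_zero]
    rcases hGann with hc | hc
    · rcases hor with h0 | h1
      · have : AI h ≤ degBF g₀ := Nat.sInf_le ⟨g₀, h0, rfl,
          Or.inl fun x => z2lem1 (G x) (L x) (h x) (hc x)⟩
        omega
      · have : AI h ≤ degBF g₁ := Nat.sInf_le ⟨g₁, h1, rfl,
          Or.inr fun x => z2lem2 (G x) (L x) (h x) (hc x)⟩
        omega
    · rcases hor with h0 | h1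
      · have : AI h ≤ degBF g₀ := Nat.sInf_le ⟨g₀, h0, rfl,
          Or.inr fun x => z2lem3 (G x) (L x) (h x) (hc x)⟩
        omega
      · have : AI h ≤ degBF g₁ := Nat.sInf_le ⟨g₁, h1, rfl,
          Or.inl fun x => z2lem4 (G x) (L x) (h x) (hc x)⟩
        omega
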